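/- arXiv:2501.07514 — 3 statements merged into one kernel-verified Lean document; each statement's English description precedes it below -/
import Mathlib

section
/- With the setup of the Partial Ranking representation (products 1..J inspected in order, product h ≤ J purchased, products J+1..M uninspected, core value y = min(u_h, z_J)): if any one of the four Partial Ranking conditions — (1) z_1 ≥ ... ≥ z_J, (2) u_h ≤ z_J when h < J, (3) u_j ≤ y for j ≤ J, j ≠ h, (4) z_k ≤ y for J < k ≤ M — is violated (i.e., the corresponding inequality fails strictly), then at least one of Weitzman's Optimal Search Rules (Optimal Ranking, Optimal Continuing, Optimal Stopping, Optimal Purchasing) is violated. -/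
/-!
Assume all four rules hold. Continuing at the last inspection `J` yields, for each earlier product,
some `z_ℓ` with `ℓ ≥ J` above its utility, and Ranking pushes that bound down to `z_J`; a non-purchased
`u_J` is below `u_h`, which is then below `z_J` as well. Together with Purchasing this puts every
non-purchased inspected utility below `y = min (u_h, z_J)`. Stopping and Purchasing put every
uninspected `z_k` below `u_h`, and Ranking puts it below `z_J`. The ordering `z_1 ≥ … ≥ z_J` is a
special case of Ranking.
-/

def OptimalRanking (z : ℕ → ℝ) (J M : ℕ) : Prop :=
  ∀ j k, 1 ≤ j → j ≤ J → j < k → k ≤ M → z j ≥ z k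

def OptimalContinuing (z u : ℕ → ℝ) (J M : ℕ) : Prop :=
  ∀ j, 1 ≤ j → j ≤ J → ∀ ℓ', 1 ≤ ℓ' → ℓ' < j → ∃ ℓ, j ≤ ℓ ∧ ℓ ≤ M ∧ z ℓ ≥ u ℓ'

def OptimalPurchasing (u : ℕ → ℝ) (J h : ℕ) : Prop :=
  ∀ j, 1 ≤ j → j ≤ J → u h ≥ u j

section

variable {z u : ℕ → ℝ} {J M h : ℕ}

theorem OptimalRanking.succ_le (hrank : OptimalRanking z J M) (hJM : J ≤ M) {j : ℕ}
    (hj : 1 ≤ j) (hjJ : j < J) : z (j + 1) ≤ z j :=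
  hrank j (j + 1) hj hjJ.le j.lt_succ_self (hjJ.trans_le hJM)

theorem OptimalRanking.le_last (hrank : OptimalRanking z J M) (hJ : 1 ≤ J) {k : ℕ}
    (hJk : J ≤ k) (hkM : k ≤ M) : z k ≤ z J := by
  rcases hJk.eq_or_lt with rfl | hJk
  · exact le_rfl
  · exact hrank J k hJ le_rfl hJk hkM

theorem OptimalContinuing.le_last (hcont : OptimalContinuing z u J M)
    (hrank : OptimalRanking z J M) (hJ : 1 ≤ J) {j : ℕ} (hj : 1 ≤ j) (hjJ : j < J) :
    u j ≤ z J := by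
  obtain ⟨ℓ, hJℓ, hℓM, hℓ⟩ := hcont J hJ le_rfl j hj hjJ
  exact hℓ.trans (hrank.le_last hJ hJℓ hℓM)

theorem OptimalContinuing.le_last_of_ne_purchased (hcont : OptimalContinuing z u J M)
    (hrank : OptimalRanking z J M) (hpurch : OptimalPurchasing u J h) (hJ : 1 ≤ J)
    (hh : 1 ≤ h) (hhJ : h ≤ J) {j : ℕ} (hj : 1 ≤ j) (hjJ : j ≤ J) (hjh : j ≠ h) :
    u j ≤ z J := by
  rcases hjJ.eq_or_lt with rfl | hjJ
  · exact (hpurch j hj le_rfl).trans (hcont.le_last hrank hJ hh (hhJ.lt_of_ne hjh.symm))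
  · exact hcont.le_last hrank hJ hj hjJ

end

/-- **Necessity direction of the Partial Ranking representation.**
If any one of the four Partial Ranking conditions is violated, then at least
one of Weitzman's Optimal Search Rules is violated. -/
theorem partial_ranking_violation_implies_rule_violation
    (J M h : ℕ) (hJ : 1 ≤ J) (hh : 1 ≤ h) (hhJ : h ≤ J) (hJM : J ≤ M)
    (z u : ℕ → ℝ) (y : ℝ) (hy : y = min (u h) (z J))
    (hviol : ¬ ((∀ j, 1 ≤ j → j < J → z j ≥ z (j + 1)) ∧
                (h < J → u h ≤ z J) ∧
                (∀ j, 1 ≤ j → j ≤ J → j ≠ h → u j ≤ y) ∧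
                (∀ k, J < k → k ≤ M → z k ≤ y))) :
    ¬ ((∀ j k, 1 ≤ j → j ≤ J → j < k → k ≤ M → z j ≥ z k) ∧
       (∀ j, 1 ≤ j → j ≤ J → ∀ ℓ', 1 ≤ ℓ' → ℓ' < j →
          ∃ ℓ, j ≤ ℓ ∧ ℓ ≤ M ∧ z ℓ ≥ u ℓ') ∧
       (∀ k, J < k → k ≤ M → ∃ j, 1 ≤ j ∧ j ≤ J ∧ u j ≥ z k) ∧
       (∀ j, 1 ≤ j → j ≤ J → u h ≥ u j)) := by
  rintro ⟨hrank, hcont, hstop, hpurch⟩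
  replace hrank : OptimalRanking z J M := hrank
  replace hcont : OptimalContinuing z u J M := hcont
  subst hy
  refine hviol ⟨fun j hj hjJ => hrank.succ_le hJM hj hjJ,
    fun hhJ' => hcont.le_last hrank hJ hh hhJ', ?_, ?_⟩
  · intro j hj hjJ hjh
    exact le_min (hpurch j hj hjJ)
      (hcont.le_last_of_ne_purchased hrank hpurch hJ hh hhJ hj hjJ hjh)
  · intro k hJk hkM
    obtain ⟨j, hj, hjJ, hzk⟩ := hstop k hJk hkM
    exact le_min (hzk.trans (hpurch j hj hjJ)) (hrank.le_last hJ hJk.le hkM)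
end

section
/- Suppose consumer i's inspected set S ⊆ M and purchase h ∈ S are observed but the inspection order is entirely unobserved (Independence and Invariance hold, no ties). Then the search process is consistent with optimality (the Gittins index policy) only if: (a) w_h > u_j for all j ∈ S \ {h}; (b) z_j > w_h for all j ∈ S \ {h}; and (c) w_h > z_k for all k ∈ M \ S, where w_h = min(z_h, u_h). Conversely, if (a), (b), (c) hold then there exists an inspection order of S under which the full Weitzman Optimal Search Rules are satisfied (e.g., inspect products of S in descending order of z, ending with h if z_h is smallest, and purchase h). -/
/-!
Necessity: in any optimal search path, the purchased product `h` and any other inspected product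
`j` are inspected in some order. If `j` comes first, continuing past `j` gives `u j < z h` and the
descending order gives `z h < z j`; if `h` comes first, continuing past `h` gives `u h < z j < z h`.
Either way `u j < w h < z j`. Optimal Stopping, together with Optimal Purchasing, bounds every
uninspected `z k` by `u h`, and Optimal Ranking bounds it by `z h`.

Sufficiency: inspect `S` in descending order of `z`. Since `w h` lies below every `z` in `S` and
above every other `u` in `S`, continuing holds for every pair whose earlier member differs from `h`;
for `h` followed by `j` we have `z j < z h`, so `w h < z j` forces `w h = u h`.
-/

/-- Weitzman's Optimal Search Rules for a realized inspection order `r`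
(a duplicate-free list enumerating the inspected set `S`) with purchase `h`,
given reservation values `z` and purchase values `u` (all pairwise distinct):
inspections proceed in strictly descending reservation-value order, every
inspected product has a larger reservation value than every uninspected one
(Optimal Ranking); every revealed purchase value is below the reservation
value of each later-inspected product (Optimal Continuing); the maximum
revealed purchase value exceeds every uninspected reservation value (Optimal
Stopping); and `h` has the largest revealed purchase value (Optimal
Purchasing). -/
def WeitzmanOSR {n : ℕ} (z u : Fin n → ℝ) (S : Finset (Fin n)) (h : Fin n)
    (r : List (Fin n)) : Prop :=
  r.Nodup ∧ r.toFinset = S ∧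
  (∀ i j : Fin r.length, i < j → z (r.get j) < z (r.get i)) ∧
  (∀ i : Fin r.length, ∀ k, k ∉ S → z k < z (r.get i)) ∧
  (∀ i ℓ : Fin r.length, ℓ < i → u (r.get ℓ) < z (r.get i)) ∧
  (∀ k, k ∉ S → ∃ j ∈ S, z k < u j) ∧
  (∀ j ∈ S, j ≠ h → u j < u h)

theorem List.Pairwise.rel_or_rel_of_mem {α : Type*} {R : α → α → Prop} {l : List α}
    (hl : l.Pairwise R) {a b : α} (ha : a ∈ l) (hb : b ∈ l) (hab : a ≠ b) : R a b ∨ R b a :=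
  have : Std.Symm fun x y => R x y ∨ R y x := ⟨fun _ _ => Or.symm⟩
  List.Pairwise.forall (R := fun x y => R x y ∨ R y x) (hl.imp Or.inl) ha hb hab

theorem Finset.exists_list_pairwise_gt_of_injective {α β : Type*} [DecidableEq α] [LinearOrder β]
    {f : α → β} (hf : Function.Injective f) (S : Finset α) :
    ∃ l : List α, l.Nodup ∧ l.toFinset = S ∧ l.Pairwise (fun a b => f b < f a) := by
  let : LinearOrder α :=
    LinearOrder.lift' (OrderDual.toDual ∘ f) (OrderDual.toDual.injective.comp hf)
  refine ⟨S.sort (· ≤ ·), S.sort_nodup _, S.sort_toFinset _, ?_⟩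
  exact S.sortedLT_sort.pairwise

section

variable {n : ℕ} {z u : Fin n → ℝ} {S : Finset (Fin n)} {h : Fin n} {r : List (Fin n)}

theorem weitzmanOSR_iff :
    WeitzmanOSR z u S h r ↔
      r.Nodup ∧ r.toFinset = S ∧ r.Pairwise (fun a b => z b < z a ∧ u a < z b) ∧
        (∀ a ∈ r, ∀ k ∉ S, z k < z a) ∧ (∀ k ∉ S, ∃ j ∈ S, z k < u j) ∧
        (∀ j ∈ S, j ≠ h → u j < u h) := by
  rw [WeitzmanOSR, List.pairwise_and_iff, List.pairwise_iff_get, List.pairwise_iff_get,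
    List.forall_mem_iff_get]
  tauto

def SearchSetConditions (z u : Fin n → ℝ) (S : Finset (Fin n)) (h : Fin n) : Prop :=
  (∀ j ∈ S, j ≠ h → u j < min (z h) (u h)) ∧
    (∀ j ∈ S, j ≠ h → min (z h) (u h) < z j) ∧
    (∀ k, k ∉ S → z k < min (z h) (u h))

theorem WeitzmanOSR.searchSetConditions (hr : WeitzmanOSR z u S h r) (hhS : h ∈ S) :
    SearchSetConditions z u S h := by
  obtain ⟨-, hS, hpw, hrank, hstop, hpur⟩ := weitzmanOSR_iff.1 hr
  have hmem : ∀ {a}, a ∈ S → a ∈ r := fun ha => List.mem_toFinset.1 (hS ▸ ha)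
  refine ⟨fun j hj hjh => ?_, fun j hj hjh => ?_, fun k hk => ?_⟩
  · have hujh := hpur j hj hjh
    rcases hpw.rel_or_rel_of_mem (hmem hj) (hmem hhS) hjh with ⟨-, hujz⟩ | ⟨hzjh, huhz⟩
    · exact lt_min hujz hujh
    · exact lt_min (by linarith) hujh
  · rcases hpw.rel_or_rel_of_mem (hmem hj) (hmem hhS) hjh with ⟨hzhj, -⟩ | ⟨-, huhj⟩
    · exact min_lt_of_left_lt hzhj
    · exact min_lt_of_right_lt huhj
  · obtain ⟨j, hj, hkj⟩ := hstop k hk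
    refine lt_min (hrank h (hmem hhS) k hk) ?_
    rcases eq_or_ne j h with rfl | hjh
    exacts [hkj, hkj.trans (hpur j hj hjh)]

namespace SearchSetConditions

theorem min_le_z (hc : SearchSetConditions z u S h) {b : Fin n} (hb : b ∈ S) :
    min (z h) (u h) ≤ z b := by
  rcases eq_or_ne b h with rfl | hbh
  exacts [min_le_left _ _, (hc.2.1 b hb hbh).le]

theorem u_lt_z_of_z_lt (hc : SearchSetConditions z u S h) {a b : Fin n} (ha : a ∈ S)
    (hb : b ∈ S) (hba : z b < z a) : u a < z b := by
  rcases eq_or_ne a h with rfl | hah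
  · rcases min_lt_iff.1 (hc.2.1 b hb (ne_of_apply_ne z hba.ne)) with hab | huab
    exacts [absurd hba hab.not_gt, huab]
  · exact (hc.1 a ha hah).trans_le (hc.min_le_z hb)

theorem exists_weitzmanOSR (hc : SearchSetConditions z u S h) (hz : Function.Injective z)
    (hhS : h ∈ S) : ∃ r, WeitzmanOSR z u S h r := by
  obtain ⟨r, hnd, hS, hdesc⟩ := S.exists_list_pairwise_gt_of_injective hz
  have hmem : ∀ {a}, a ∈ r → a ∈ S := fun ha => hS ▸ List.mem_toFinset.2 ha
  refine ⟨r, weitzmanOSR_iff.2 ⟨hnd, hS, ?_, ?_, ?_, ?_⟩⟩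
  · exact hdesc.imp_of_mem fun ha hb hba => ⟨hba, hc.u_lt_z_of_z_lt (hmem ha) (hmem hb) hba⟩
  · exact fun a ha k hk => (hc.2.2 k hk).trans_le (hc.min_le_z (hmem ha))
  · exact fun k hk => ⟨h, hhS, (hc.2.2 k hk).trans_le (min_le_right _ _)⟩
  · exact fun j hj hjh => (hc.1 j hj hjh).trans_le (min_le_right _ _)

end SearchSetConditions

end

theorem unordered_searched_set_characterization_general
    {n : ℕ} (z u : Fin n → ℝ) (S : Finset (Fin n)) (h : Fin n) (hhS : h ∈ S)
    (hzinj : Function.Injective z) :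
    ((∃ r : List (Fin n), WeitzmanOSR z u S h r) →
       ((∀ j ∈ S, j ≠ h → u j < min (z h) (u h)) ∧
        (∀ j ∈ S, j ≠ h → min (z h) (u h) < z j) ∧
        (∀ k, k ∉ S → z k < min (z h) (u h)))) ∧
    (((∀ j ∈ S, j ≠ h → u j < min (z h) (u h)) ∧
      (∀ j ∈ S, j ≠ h → min (z h) (u h) < z j) ∧
      (∀ k, k ∉ S → z k < min (z h) (u h))) →
       ∃ r : List (Fin n), WeitzmanOSR z u S h r) :=
  ⟨fun ⟨_, hr⟩ => hr.searchSetConditions hhS,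
    fun hc => SearchSetConditions.exists_weitzmanOSR hc hzinj hhS⟩

/-- **Optimality with unobserved inspection order (Proposition 4).**
With the inspected set `S` and purchase `h ∈ S` observed but the inspection
order unobserved, and all values pairwise distinct: some inspection order of
`S` satisfies Weitzman's Optimal Search Rules **only if**
(a) `w h > u j` for all other inspected `j`, (b) `z j > w h` for all other
inspected `j`, and (c) `w h > z k` for all uninspected `k`, where
`w h = min (z h) (u h)`; and **conversely**, if (a), (b), (c) hold then some
inspection order of `S` satisfies the full Optimal Search Rules. -/
theorem unordered_searched_set_characterization
    {n : ℕ} (z u : Fin n → ℝ) (S : Finset (Fin n)) (h : Fin n) (hhS : h ∈ S)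
    (hdist : ∀ j k : Fin n, z j ≠ u k)
    (hzinj : Function.Injective z) (huinj : Function.Injective u) :
    ((∃ r : List (Fin n), WeitzmanOSR z u S h r) →
       ((∀ j ∈ S, j ≠ h → u j < min (z h) (u h)) ∧
        (∀ j ∈ S, j ≠ h → min (z h) (u h) < z j) ∧
        (∀ k, k ∉ S → z k < min (z h) (u h)))) ∧
    (((∀ j ∈ S, j ≠ h → u j < min (z h) (u h)) ∧
      (∀ j ∈ S, j ≠ h → min (z h) (u h) < z j) ∧
      (∀ k, k ∉ S → z k < min (z h) (u h))) →
       ∃ r : List (Fin n), WeitzmanOSR z u S h r) :=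
  unordered_searched_set_characterization_general z u S h hhS hzinj
end

section
/- The differencing matrix D̃ of the partial ranking representation (case h = J, i.e., the purchased product is the last inspected) has rank J + M − 1, where D̃ is the (J + 2M − 3) × (J + M) block matrix [[D̃_1, D̃_2],[D̃_3, D̃_4],[D̃_5, D̃_6]] with: D̃_1 the (J−1) × (J+1) matrix with rows e_{i+1}^T − e_{i+2}^T for i = 1..J−1 (zero first column, then bidiagonal 1/−1); D̃_2 = 0 of size (J−1) × (M−1); D̃_3 the (M−1) × (J+1) matrix with first column all −1 and zeros elsewhere; D̃_4 = I_{M−1}; D̃_5 the (M−1) × (J+1) matrix with second column all −1 and zeros elsewhere; D̃_6 = I_{M−1}. -/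
/-!
Every row of `D̃` has the form `eᵢᵀ - eⱼᵀ`, so `D̃` is the oriented incidence matrix of a graph
on its `J + M` columns, and a vector lies in its kernel iff it is constant along every edge.
This graph is connected: columns `1, …, J` form a path (first block), every column beyond `J`
is joined to column `0` (second block), and column `J + 1` is joined to column `1` (third
block). Hence the kernel is spanned by the all-ones vector, and rank–nullity gives rank
`J + M - 1`.
-/

namespace Matrix

variable {m n K : Type*} [Fintype n] [Field K]

theorem rank_eq_card_sub_one_of_ker_eq_span {A : Matrix m n K} {v : n → K} (hv : v ≠ 0)
    (hker : LinearMap.ker A.mulVecLin = K ∙ v) : A.rank = Fintype.card n - 1 := by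
  have h := LinearMap.finrank_range_add_finrank_ker A.mulVecLin
  rw [hker, finrank_span_singleton hv, Module.finrank_fintype_fun_eq_card] at h
  rw [Matrix.rank]
  omega

variable [DecidableEq n]

def RowEdge (A : Matrix m n K) (i j : n) : Prop :=
  ∃ r, A r = Pi.single i 1 - Pi.single j 1

theorem mulVec_apply_of_row_eq_single_sub_single {A : Matrix m n K} {r : m} {i j : n}
    (h : A r = Pi.single i 1 - Pi.single j 1) (x : n → K) :
    (A *ᵥ x) r = x i - x j := by
  change A r ⬝ᵥ x = _
  rw [h, sub_dotProduct, single_dotProduct, single_dotProduct, one_mul, one_mul]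

theorem apply_eq_of_eqvGen_rowEdge {A : Matrix m n K} {x : n → K} (hx : A *ᵥ x = 0) {i j : n}
    (hij : Relation.EqvGen A.RowEdge i j) : x i = x j := by
  induction hij with
  | rel i j hij =>
    obtain ⟨r, hr⟩ := hij
    rw [← sub_eq_zero, ← mulVec_apply_of_row_eq_single_sub_single hr, hx, Pi.zero_apply]
  | refl => rfl
  | symm _ _ _ ih => exact ih.symm
  | trans _ _ _ _ _ ih₁ ih₂ => exact ih₁.trans ih₂

theorem ker_mulVecLin_eq_span_one (A : Matrix m n K)
    (hrows : ∀ r, ∃ i j, A r = Pi.single i 1 - Pi.single j 1)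
    (hconn : ∀ i j, Relation.EqvGen A.RowEdge i j) :
    LinearMap.ker A.mulVecLin = K ∙ (1 : n → K) := by
  ext x
  rw [LinearMap.mem_ker, mulVecLin_apply, Submodule.mem_span_singleton]
  constructor
  · intro hx
    rcases isEmpty_or_nonempty n with hn | ⟨⟨i₀⟩⟩
    · exact ⟨0, Subsingleton.elim _ _⟩
    · exact ⟨x i₀, funext fun i => by simp [apply_eq_of_eqvGen_rowEdge hx (hconn i₀ i)]⟩
  · rintro ⟨t, rfl⟩
    funext r
    obtain ⟨i, j, hr⟩ := hrows r
    simp [mulVec_apply_of_row_eq_single_sub_single hr]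

theorem rank_eq_card_sub_one_of_eqvGen_rowEdge [Nonempty n] (A : Matrix m n K)
    (hrows : ∀ r, ∃ i j, A r = Pi.single i 1 - Pi.single j 1)
    (hconn : ∀ i j, Relation.EqvGen A.RowEdge i j) : A.rank = Fintype.card n - 1 :=
  rank_eq_card_sub_one_of_ker_eq_span one_ne_zero (ker_mulVecLin_eq_span_one A hrows hconn)

end Matrix

open Matrix

def differencingMatrixTilde (J M : ℕ) : Matrix (Fin (J + 2 * M - 3)) (Fin (J + M)) ℝ :=
  fun r c =>
    if (r : ℕ) < J - 1 then
      (if (c : ℕ) = (r : ℕ) + 1 then 1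
       else if (c : ℕ) = (r : ℕ) + 2 then -1 else 0)
    else if (r : ℕ) < J - 1 + (M - 1) then
      (if (c : ℕ) = 0 then -1
       else if (c : ℕ) = (r : ℕ) + 2 then 1 else 0)
    else
      (if (c : ℕ) = 1 then -1
       else if (c : ℕ) = (r : ℕ) + 3 - M then 1 else 0)

namespace differencingMatrixTilde

variable {J M : ℕ}

theorem row_of_lt {r : Fin (J + 2 * M - 3)} (hr : (r : ℕ) < J - 1) :
    differencingMatrixTilde J M r =
      Pi.single ⟨r + 1, by omega⟩ 1 - Pi.single ⟨r + 2, by omega⟩ 1 := by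
  funext c
  simp only [differencingMatrixTilde, if_pos hr, Pi.sub_apply, Pi.single_apply, Fin.ext_iff]
  split_ifs <;> first | omega | norm_num

theorem row_of_le_of_lt {r : Fin (J + 2 * M - 3)} (hr₁ : J - 1 ≤ r)
    (hr₂ : (r : ℕ) < J + M - 2) :
    differencingMatrixTilde J M r =
      Pi.single ⟨r + 2, by omega⟩ 1 - Pi.single ⟨0, by omega⟩ 1 := by
  funext c
  simp only [differencingMatrixTilde, Pi.sub_apply, Pi.single_apply, Fin.ext_iff]
  split_ifs <;> first | omega | norm_num

theorem row_of_ge (hJ : 1 ≤ J) {r : Fin (J + 2 * M - 3)} (hr : J + M - 2 ≤ r) :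
    differencingMatrixTilde J M r =
      Pi.single ⟨r + 3 - M, by omega⟩ 1 - Pi.single ⟨1, by omega⟩ 1 := by
  funext c
  simp only [differencingMatrixTilde, Pi.sub_apply, Pi.single_apply, Fin.ext_iff]
  split_ifs <;> first | omega | norm_num

theorem exists_row_eq_single_sub_single (hJ : 1 ≤ J) (r : Fin (J + 2 * M - 3)) :
    ∃ i j, differencingMatrixTilde J M r = Pi.single i 1 - Pi.single j 1 := by
  by_cases h₁ : (r : ℕ) < J - 1
  · exact ⟨_, _, row_of_lt h₁⟩
  by_cases h₂ : (r : ℕ) < J + M - 2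
  · exact ⟨_, _, row_of_le_of_lt (by omega) h₂⟩
  · exact ⟨_, _, row_of_ge hJ (by omega)⟩

open Relation in
theorem eqvGen_rowEdge (hJ : 1 ≤ J) (hM : 2 ≤ M) (i j : Fin (J + M)) :
    EqvGen (differencingMatrixTilde J M).RowEdge i j := by
  have high (c : Fin (J + M)) (hc : J < c) :
      (differencingMatrixTilde J M).RowEdge c ⟨0, by omega⟩ :=
    ⟨⟨c - 2, by omega⟩, by
      rw [row_of_le_of_lt (by simp; omega) (by simp; omega)]; congr; simp; omega⟩
  have bridge : (differencingMatrixTilde J M).RowEdge ⟨J + 1, by omega⟩ ⟨1, by omega⟩ :=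
    ⟨⟨J + M - 2, by omega⟩, by rw [row_of_ge hJ le_rfl]; congr 3; simp; omega⟩
  have path (k : ℕ) (hk : k < J) :
      EqvGen (differencingMatrixTilde J M).RowEdge ⟨k + 1, by omega⟩ ⟨1, by omega⟩ := by
    induction k with
    | zero => exact .refl _
    | succ k ih =>
      exact .trans _ _ _ (.symm _ _ (.rel _ _ ⟨⟨k, by omega⟩, row_of_lt (by simp; omega)⟩))
        (ih (by omega))
  have to_zero (c : Fin (J + M)) :
      EqvGen (differencingMatrixTilde J M).RowEdge c ⟨0, by omega⟩ := by
    rcases c with ⟨_ | k, hc⟩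
    · exact .refl _
    by_cases hk : k < J
    · exact .trans _ _ _ (path k hk)
        (.trans _ _ _ (.symm _ _ (.rel _ _ bridge)) (.rel _ _ (high _ J.lt_succ_self)))
    · exact .rel _ _ (high _ (by simp; omega))
  exact .trans _ _ _ (to_zero i) (.symm _ _ (to_zero j))

end differencingMatrixTilde

theorem differencing_matrix_tilde_rank_general
    (J M : ℕ) (hJ : 1 ≤ J) (hM : 2 ≤ M)
    (D : Matrix (Fin (J + 2 * M - 3)) (Fin (J + M)) ℝ)
    (hD : ∀ (r : Fin (J + 2 * M - 3)) (c : Fin (J + M)),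
      D r c =
        if (r : ℕ) < J - 1 then
          (if (c : ℕ) = (r : ℕ) + 1 then 1
           else if (c : ℕ) = (r : ℕ) + 2 then -1 else 0)
        else if (r : ℕ) < J - 1 + (M - 1) then
          (if (c : ℕ) = 0 then -1
           else if (c : ℕ) = (r : ℕ) + 2 then 1 else 0)
        else
          (if (c : ℕ) = 1 then -1
           else if (c : ℕ) = (r : ℕ) + 3 - M then 1 else 0)) :
    D.rank = J + M - 1 := by
  obtain rfl : D = differencingMatrixTilde J M := Matrix.ext hD
  have : Nonempty (Fin (J + M)) := ⟨⟨0, by omega⟩⟩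
  rw [rank_eq_card_sub_one_of_eqvGen_rowEdge _
    (differencingMatrixTilde.exists_row_eq_single_sub_single hJ)
    (differencingMatrixTilde.eqvGen_rowEdge hJ hM), Fintype.card_fin]

/-- **Rank of the differencing matrix `D̃` (case `h = J`).**
`D̃` is the `(J + 2M − 3) × (J + M)` block matrix: the first `J − 1` rows are
`eᵢ₊₁ᵀ − eᵢ₊₂ᵀ` (zero first column, then bidiagonal `1/−1`, zeros in the last
`M − 1` columns); the next `M − 1` rows have `−1` in column `0` and an identity
block in the last `M − 1` columns (here `+1` at column `r + 2`); the final
`M − 1` rows have `−1` in column `1` and an identity block in the last `M − 1`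
columns (here `+1` at column `r + 3 − M`).  Although it has `J + 2M − 3` rows,
its rank is exactly `J + M − 1`. -/
theorem differencing_matrix_tilde_rank
    (J M : ℕ) (hJ : 1 ≤ J) (hM : 2 ≤ M) (hJM : J ≤ M)
    (D : Matrix (Fin (J + 2 * M - 3)) (Fin (J + M)) ℝ)
    (hD : ∀ (r : Fin (J + 2 * M - 3)) (c : Fin (J + M)),
      D r c =
        if (r : ℕ) < J - 1 then
          (if (c : ℕ) = (r : ℕ) + 1 then 1
           else if (c : ℕ) = (r : ℕ) + 2 then -1 else 0)
        else if (r : ℕ) < J - 1 + (M - 1) then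
          (if (c : ℕ) = 0 then -1
           else if (c : ℕ) = (r : ℕ) + 2 then 1 else 0)
        else
          (if (c : ℕ) = 1 then -1
           else if (c : ℕ) = (r : ℕ) + 3 - M then 1 else 0)) :
    D.rank = J + M - 1 :=
  differencing_matrix_tilde_rank_general J M hJ hM D hD
end
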